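/- arXiv:2302.12520 — 2 statements merged into one kernel-verified Lean document; each statement's English description precedes it below -/
import Mathlib

section
/- Let n agents have reduction rates λ_1,…,λ_n ≥ 0 and budget b ∈ ℕ. Any allocation c : Fin n → ℕ with Σ c_i ≤ b that maximizes Σ_i (1 - e^{-λ_i c_i}) achieves objective value equal to the sum of the b largest elements of the multiset {Δ_i^j : i ∈ [n], 1 ≤ j ≤ b}, where Δ_i^j = e^{-λ_i(j-1)} - e^{-λ_i j} (assuming all λ_i > 0 so all jumps are positive). -/
/-!
Write `jump l j = e^{-l(j-1)} - e^{-l j}`. The value of an allocation `c` telescopes to the sum of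
the jumps `jump (λ i) j` with `1 ≤ j ≤ c i`: a sub-multiset of at most `b` of all the jumps, hence
at most the sum of the `b` largest ones. Conversely, the `b` largest jumps come from a set `Q` of at
most `b` pairs `(i, j)`; as each `jump (λ i)` is antitone, replacing the indices `j` of agent `i` by
`1, …, #Q_i` does not decrease the sum, so some allocation of total `≤ b` is worth at least the sum
of the `b` largest jumps, and so is the optimal `c`.
-/

open Finset Real

theorem Multiset.exists_le_map_eq {α β : Type*} {f : β → α} {s : Multiset β} {t : Multiset α}
    (h : t ≤ s.map f) : ∃ u ≤ s, u.map f = t := by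
  induction s using Quotient.inductionOn
  induction t using Quotient.inductionOn
  obtain ⟨w, hw, hws⟩ := h
  obtain ⟨l, hl, rfl⟩ := List.sublist_map_iff.mp hws
  exact ⟨l, hl.subperm, Quot.sound hw⟩

section LargestElements

variable {α : Type*} [AddCommMonoid α] [LinearOrder α]

theorem List.sum_take_le_sum_take_cons [IsOrderedAddMonoid α] {a : α} {L : List α}
    (hLa : ∀ x ∈ L, x ≤ a) (ha : 0 ≤ a) (k : ℕ) : (L.take k).sum ≤ ((a :: L).take k).sum := by
  cases k with
  | zero => simp
  | succ k =>
    rw [List.take_add_one, List.take_succ_cons, List.sum_append, List.sum_cons, add_comm]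
    gcongr
    cases h : L[k]? with
    | none => simpa using ha
    | some x => simpa using hLa x (List.mem_of_getElem? h)

theorem List.Sublist.sum_le_sum_take [IsOrderedAddMonoid α] {L' L : List α} (h : L'.Sublist L)
    (hL : L.Pairwise (· ≥ ·)) (h0 : ∀ x ∈ L, 0 ≤ x) {k : ℕ} (hk : L'.length ≤ k) :
    L'.sum ≤ (L.take k).sum := by
  induction h generalizing k with
  | slnil => simp
  | cons a _ ih =>
    exact (ih hL.of_cons (fun x hx => h0 x (.tail _ hx)) hk).trans
      (List.sum_take_le_sum_take_cons (fun x hx => List.rel_of_pairwise_cons hL hx)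
        (h0 a (.head _)) k)
  | cons_cons a _ ih =>
    cases k with
    | zero => simp at hk
    | succ k =>
      simp only [List.sum_cons, List.take_succ_cons]
      gcongr
      exact ih hL.of_cons (fun x hx => h0 x (.tail _ hx)) (by simpa using hk)

theorem Multiset.sum_le_sum_take_sort [IsOrderedAddMonoid α] {s t : Multiset α} (hts : t ≤ s)
    (h0 : ∀ x ∈ s, 0 ≤ x) {k : ℕ} (hk : card t ≤ k) : t.sum ≤ ((s.sort (· ≥ ·)).take k).sum := by
  have hsub : (t.sort (· ≥ ·)).Sublist (s.sort (· ≥ ·)) :=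
    List.sublist_of_subperm_of_pairwise (by rwa [← Multiset.coe_le, sort_eq, sort_eq])
      (pairwise_sort _ _) (pairwise_sort _ _)
  have := hsub.sum_le_sum_take (pairwise_sort _ _) (by simpa using h0) (by simpa using hk)
  rwa [← Multiset.sum_coe, sort_eq] at this

theorem Finset.exists_subset_card_le_sum_eq_sum_take_sort {β : Type*} (s : Finset β)
    (f : β → α) (k : ℕ) :
    ∃ Q ⊆ s, #Q ≤ k ∧ ∑ p ∈ Q, f p = (((s.val.map f).sort (· ≥ ·)).take k).sum := by
  set L := (s.val.map f).sort (· ≥ ·)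
  have htake : ((L.take k : List α) : Multiset α) ≤ s.val.map f := by
    rw [← Multiset.sort_eq (s.val.map f) (· ≥ ·)]
    exact Multiset.coe_le.mpr (List.take_sublist k L).subperm
  obtain ⟨u, hus, hu⟩ := Multiset.exists_le_map_eq htake
  refine ⟨⟨u, Multiset.nodup_of_le hus s.nodup⟩, val_le_iff.mp hus, ?_, ?_⟩
  · have := congrArg Multiset.card hu
    simp only [Multiset.card_map, Multiset.coe_card, List.length_take] at this
    exact this.trans_le (min_le_left _ _)
  · simp [Finset.sum, hu]

end LargestElements

theorem Antitone.sum_le_sum_Ico {M : Type*} [AddCommMonoid M] [PartialOrder M]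
    [IsOrderedAddMonoid M] {g : ℕ → M} (hg : Antitone g) {m : ℕ} (J : Finset ℕ)
    (hJ : ∀ j ∈ J, m ≤ j) : ∑ j ∈ J, g j ≤ ∑ j ∈ Ico m (m + #J), g j := by
  induction J using Finset.induction_on_max with
  | empty => simp
  | insert a s has ih =>
    have hJs : ∀ j ∈ s, m ≤ j := fun j hj => hJ j (mem_insert_of_mem hj)
    have hcard : m + #s ≤ a := by
      have := card_le_card fun j hj => mem_Ico.2 ⟨hJs j hj, has j hj⟩
      simp only [Nat.card_Ico] at this
      have := hJ a (mem_insert_self a s)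
      omega
    have ha : a ∉ s := fun h => lt_irrefl a (has a h)
    rw [sum_insert ha, card_insert_of_notMem ha, ← add_assoc, sum_Ico_succ_top (by omega),
      add_comm (g a)]
    exact add_le_add (ih hJs) (hg hcard)

noncomputable def jump (l : ℝ) (j : ℕ) : ℝ := exp (-l * ((j : ℝ) - 1)) - exp (-l * j)

theorem jump_eq_mul (l : ℝ) (j : ℕ) : jump l j = exp (-l * ((j : ℝ) - 1)) * (1 - exp (-l)) := by
  rw [jump, mul_one_sub, ← exp_add]
  ring_nf

theorem jump_nonneg {l : ℝ} (hl : 0 ≤ l) (j : ℕ) : 0 ≤ jump l j := by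
  rw [jump_eq_mul]
  exact mul_nonneg (exp_pos _).le (sub_nonneg.2 (exp_le_one_iff.2 (by linarith)))

theorem jump_antitone {l : ℝ} (hl : 0 ≤ l) : Antitone (jump l) := by
  intro j j' hjj'
  have hjj'_real : (j : ℝ) ≤ j' := by exact_mod_cast hjj'
  rw [jump_eq_mul, jump_eq_mul]
  exact mul_le_mul_of_nonneg_right (exp_le_exp.2 (by nlinarith))
    (sub_nonneg.2 (exp_le_one_iff.2 (by linarith)))

theorem sum_jump_Icc (l : ℝ) (k : ℕ) : ∑ j ∈ Icc 1 k, jump l j = 1 - exp (-l * k) := by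
  induction k with
  | zero => simp
  | succ k ih =>
    rw [sum_Icc_succ_top (by omega), ih, jump]
    push_cast
    ring_nf

theorem sum_jump_le {l : ℝ} (hl : 0 ≤ l) (J : Finset ℕ) (hJ : ∀ j ∈ J, 1 ≤ j) :
    ∑ j ∈ J, jump l j ≤ 1 - exp (-l * #J) := by
  rw [← sum_jump_Icc, ← Ico_add_one_right_eq_Icc, add_comm #J 1]
  exact (jump_antitone hl).sum_le_sum_Ico J hJ

section Allocation

variable {ι : Type*} [Fintype ι]

theorem sum_filter_le_eq_sum_Icc {M : Type*} [AddCommMonoid M] {b : ℕ} {c : ι → ℕ}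
    (hcb : ∀ i, c i ≤ b) (F : ι × ℕ → M) :
    ∑ p ∈ (univ ×ˢ Icc 1 b).filter (fun p => p.2 ≤ c p.1), F p =
      ∑ i, ∑ j ∈ Icc 1 (c i), F (i, j) :=
  sum_finset_product _ _ _ fun p => by
    simp only [mem_filter, mem_product, mem_univ, mem_Icc, true_and]
    have := hcb p.1
    omega

theorem value_le_sum_take_sort_jumps (lam : ι → ℝ) (hlam : ∀ i, 0 ≤ lam i) {b : ℕ} (c : ι → ℕ)
    (hc : ∑ i, c i ≤ b) :
    ∑ i, (1 - exp (-lam i * c i)) ≤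
      ((((univ ×ˢ Icc 1 b).val.map fun p : ι × ℕ => jump (lam p.1) p.2).sort (· ≥ ·)).take
        b).sum := by
  have hcb : ∀ i, c i ≤ b := fun i =>
    (single_le_sum (fun _ _ => Nat.zero_le _) (mem_univ i)).trans hc
  set P := (univ ×ˢ Icc 1 b).filter (fun p => p.2 ≤ c p.1)
  have hP : ∑ i, (1 - exp (-lam i * c i)) = (P.val.map fun p => jump (lam p.1) p.2).sum := by
    rw [← Finset.sum_eq_multiset_sum, sum_filter_le_eq_sum_Icc hcb]
    simp only [sum_jump_Icc]
  rw [hP]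
  refine Multiset.sum_le_sum_take_sort (Multiset.map_le_map (val_le_iff.2 (filter_subset _ _)))
    (fun x hx => ?_) ?_
  · obtain ⟨p, -, rfl⟩ := Multiset.mem_map.1 hx
    exact jump_nonneg (hlam p.1) p.2
  · rw [Multiset.card_map, card_val, card_eq_sum_ones, sum_filter_le_eq_sum_Icc hcb]
    simpa using hc

theorem exists_sum_eq_card_sum_jumps_le_value (lam : ι → ℝ) (hlam : ∀ i, 0 ≤ lam i)
    (Q : Finset (ι × ℕ)) (hQ : ∀ p ∈ Q, 1 ≤ p.2) :
    ∃ c : ι → ℕ, ∑ i, c i = #Q ∧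
      ∑ p ∈ Q, jump (lam p.1) p.2 ≤ ∑ i, (1 - exp (-lam i * c i)) := by
  classical
  set slice : ι → Finset ℕ := fun i => (Q.image Prod.snd).filter fun j => (i, j) ∈ Q
  have hQ_slice : ∀ p, p ∈ Q ↔ p.1 ∈ univ ∧ p.2 ∈ slice p.1 := fun p => by
    simpa [slice] using fun hp => ⟨p.1, hp⟩
  refine ⟨fun i => #(slice i), ?_, ?_⟩
  · simp only [card_eq_sum_ones, sum_finset_product _ _ _ hQ_slice]
  · rw [sum_finset_product _ _ _ hQ_slice]
    gcongr with i
    exact sum_jump_le (hlam i) (slice i) fun j hj => hQ (i, j) (mem_filter.1 hj).2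

end Allocation

theorem optimal_value_eq_sum_of_b_largest_jumps (n b : ℕ) (lam : Fin n → ℝ)
    (hlam : ∀ i, 0 < lam i) (c : Fin n → ℕ) (hc : ∑ i, c i ≤ b)
    (hopt : ∀ c' : Fin n → ℕ, (∑ i, c' i ≤ b) →
      ∑ i, (1 - Real.exp (-lam i * c' i)) ≤ ∑ i, (1 - Real.exp (-lam i * c i))) :
    ∑ i, (1 - Real.exp (-lam i * c i)) =
      (((((Finset.univ : Finset (Fin n)) ×ˢ Finset.Icc 1 b).val.map
          (fun p : Fin n × ℕ =>
            Real.exp (-lam p.1 * ((p.2 : ℝ) - 1)) - Real.exp (-lam p.1 * p.2))).sort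
        (· ≥ ·)).take b).sum := by
  have hlam' : ∀ i, 0 ≤ lam i := fun i => (hlam i).le
  refine le_antisymm (value_le_sum_take_sort_jumps lam hlam' c hc) ?_
  obtain ⟨Q, hQ, hQb, hQsum⟩ := exists_subset_card_le_sum_eq_sum_take_sort
    (univ ×ˢ Icc 1 b) (fun p : Fin n × ℕ => jump (lam p.1) p.2) b
  obtain ⟨c', hc', hle⟩ := exists_sum_eq_card_sum_jumps_le_value lam hlam' Q
    fun p hp => (mem_Icc.1 (mem_product.1 (hQ hp)).2).1
  calc _ = ∑ p ∈ Q, jump (lam p.1) p.2 := hQsum.symm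
    _ ≤ ∑ i, (1 - exp (-lam i * c' i)) := hle
    _ ≤ _ := hopt c' (hc' ▸ hQb)
end

section
/- Diminishing returns of the optimal value: let V(b) denote the optimal value of the ExpResponse problem with integer budget b and fixed rates λ_i > 0. Then V(b+1) - V(b) is nonincreasing in b, i.e., V(b+2) - V(b+1) ≤ V(b+1) - V(b). -/
/-!
Write `V(b)` for the best total gain `∑ i, g i (c i)` over allocations `c` of at most `b` units,
where every gain `g i` has nonincreasing increments (for `1 - exp (-λ k)` they are
`exp (-λ k) (1 - exp (-λ))`). The allocations are finitely many, so `V(b)` and `V(b + 2)` are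
attained, at `c` and `d` say. If `d` uses more than `b + 1` units, some agent `j` has `c j < d j`;
moving one unit at `j` from `d` to `c` does not decrease the total by concavity of `g j`, and
leaves two allocations of at most `b + 1` units. Hence `V(b) + V(b + 2) ≤ 2 V(b + 1)`.
-/

noncomputable def expResponseValue (n : ℕ) (lam : Fin n → ℝ) (b : ℕ) : ℝ :=
  sSup {v : ℝ | ∃ c : Fin n → ℕ, (∑ i, c i ≤ b) ∧
    v = ∑ i, (1 - Real.exp (-lam i * c i))}

open Finset Function

section Allocation

variable {ι : Type*} [Fintype ι]

theorem sum_apply_update_add [DecidableEq ι] {M : Type*} [AddCommMonoid M]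
    (g : ι → ℕ → M) (c : ι → ℕ) (j : ι) (v : ℕ) :
    ∑ i, g i (update c j v i) + g j (c j) = ∑ i, g i (c i) + g j v := by
  simp_rw [apply_update g c j v, sum_update_of_mem (mem_univ j),
    sum_eq_add_sum_sdiff_singleton_of_mem (mem_univ j) fun i ↦ g i (c i)]
  abel

theorem add_add_sub_one_le_of_antitone_increment {g : ℕ → ℝ}
    (hg : Antitone fun k ↦ g (k + 1) - g k) {x y : ℕ} (hxy : x < y) :
    g x + g y ≤ g (x + 1) + g (y - 1) := by
  have h : g (y - 1 + 1) - g (y - 1) ≤ g (x + 1) - g x := hg (Nat.le_sub_one_of_lt hxy)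
  rw [Nat.sub_add_cancel (Nat.one_le_of_lt hxy)] at h
  linarith

def allocValues (g : ι → ℕ → ℝ) (b : ℕ) : Set ℝ :=
  {v | ∃ c : ι → ℕ, ∑ i, c i ≤ b ∧ v = ∑ i, g i (c i)}

noncomputable def optValue (g : ι → ℕ → ℝ) (b : ℕ) : ℝ :=
  sSup (allocValues g b)

variable (g : ι → ℕ → ℝ)

theorem allocValues_finite (b : ℕ) : (allocValues g b).Finite := by
  have hc : {c : ι → ℕ | ∑ i, c i ≤ b}.Finite :=
    (Set.Finite.pi fun _ ↦ Set.finite_Iic b).subset fun c hc i _ ↦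
      (single_le_sum (fun i _ ↦ Nat.zero_le (c i)) (mem_univ i)).trans hc
  refine (hc.image fun c ↦ ∑ i, g i (c i)).subset ?_
  rintro v ⟨c, hc, rfl⟩
  exact ⟨c, hc, rfl⟩

theorem allocValues_nonempty (b : ℕ) : (allocValues g b).Nonempty :=
  ⟨_, 0, by simp, rfl⟩

theorem le_optValue {b : ℕ} {c : ι → ℕ} (hc : ∑ i, c i ≤ b) :
    ∑ i, g i (c i) ≤ optValue g b :=
  le_csSup (allocValues_finite g b).bddAbove ⟨c, hc, rfl⟩

theorem exists_optValue_eq (b : ℕ) :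
    ∃ c : ι → ℕ, ∑ i, c i ≤ b ∧ optValue g b = ∑ i, g i (c i) :=
  (allocValues_nonempty g b).csSup_mem (allocValues_finite g b)

variable {g}

theorem add_le_two_mul_optValue (hg : ∀ i, Antitone fun k ↦ g i (k + 1) - g i k) {b : ℕ}
    {c d : ι → ℕ} (hc : ∑ i, c i ≤ b) (hd : ∑ i, d i ≤ b + 2) :
    ∑ i, g i (c i) + ∑ i, g i (d i) ≤ 2 * optValue g (b + 1) := by
  classical
  by_cases hd_le : ∑ i, d i ≤ b + 1
  · linarith [le_optValue g (show ∑ i, c i ≤ b + 1 by omega), le_optValue g hd_le]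
  obtain ⟨j, -, hj⟩ := exists_lt_of_sum_lt (s := univ) (f := c) (g := d) (by omega)
  have hc_units := sum_apply_update_add (fun _ ↦ id) c j (c j + 1)
  have hd_units := sum_apply_update_add (fun _ ↦ id) d j (d j - 1)
  simp only [id] at hc_units hd_units
  have hc_gain := sum_apply_update_add g c j (c j + 1)
  have hd_gain := sum_apply_update_add g d j (d j - 1)
  have hc_opt := le_optValue g (b := b + 1) (c := update c j (c j + 1)) (by omega)
  have hd_opt := le_optValue g (b := b + 1) (c := update d j (d j - 1)) (by omega)
  linarith [add_add_sub_one_le_of_antitone_increment (hg j) hj]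

theorem optValue_add_two_sub_le (hg : ∀ i, Antitone fun k ↦ g i (k + 1) - g i k) (b : ℕ) :
    optValue g (b + 2) - optValue g (b + 1) ≤ optValue g (b + 1) - optValue g b := by
  obtain ⟨c, hc, hVc⟩ := exists_optValue_eq g b
  obtain ⟨d, hd, hVd⟩ := exists_optValue_eq g (b + 2)
  linarith [add_le_two_mul_optValue hg hc hd]

end Allocation

theorem antitone_increment_one_sub_exp {l : ℝ} (hl : 0 ≤ l) :
    Antitone fun k : ℕ ↦ (1 - Real.exp (-l * (k + 1 : ℕ))) - (1 - Real.exp (-l * k)) := by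
  intro m k hmk
  have h : Real.exp (-l * k) ≤ Real.exp (-l * m) :=
    Real.exp_le_exp.mpr (mul_le_mul_of_nonpos_left (by exact_mod_cast hmk) (neg_nonpos.mpr hl))
  have h1 : Real.exp (-l) ≤ 1 := Real.exp_le_one_iff.mpr (neg_nonpos.mpr hl)
  simp only [Nat.cast_add, Nat.cast_one, mul_add, mul_one, Real.exp_add]
  nlinarith [Real.exp_pos (-l * k)]

theorem optimal_value_diminishing_returns (n : ℕ) (lam : Fin n → ℝ)
    (hlam : ∀ i, 0 < lam i) (b : ℕ) :
    expResponseValue n lam (b + 2) - expResponseValue n lam (b + 1) ≤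
      expResponseValue n lam (b + 1) - expResponseValue n lam b :=
  optValue_add_two_sub_le (g := fun i k ↦ 1 - Real.exp (-lam i * k))
    (fun i ↦ antitone_increment_one_sub_exp (hlam i).le) b
end
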